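/- Let N be a finite set, p : N → ℝ with p_u ≥ 0 and Σ_{u∈N} p_u ≤ 1, and q : N → [0,1]. Let H > 0 and λ ∈ (0,1) satisfy Σ_{u∈N} p_u G(q_u) ≤ (1-λ)·H. Let 0 = v_0 ≤ … ≤ v_w = 1 be a (δ,η)-net with δ = λH/6 and η = λ/3, and partition N into groups by assigning each u ∈ N to exactly one interval I_k = [v_{k-1}, v_k] containing q_u. For each group J ⊆ N with p_J = Σ_{u∈J} p_u > 0 set q_J = (Σ_{u∈J} p_u q_u)/p_J. Then Σ_{J: p_J > 0} p_J · G(q_J) ≤ (1 - λ/2)·H. -/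

import Mathlib

/-! A group `J` lying in one net interval has its average `q_J` in that interval too, so the net
property bounds `G(q_J)` by `δ + (1 + η) G(q_u)` for every `u ∈ J`. Averaging over `J` with the
weights `p_u` and summing over the groups gives at most
`δ + (1 + η)(1 - λ) H = (1 - λ/2 - λ²/3) H`. -/

noncomputable def G (q : ℝ) : ℝ := 2 * Real.sqrt (q * (1 - q))

lemma G_nonneg (x : ℝ) : 0 ≤ G x := by
  unfold G; positivity

section WeightedAverage

variable {ι : Type*} {s : Finset ι} {p q : ι → ℝ}

lemma div_sum_mem_Icc {a b : ℝ} (hp : ∀ i ∈ s, 0 ≤ p i) (hpos : 0 < ∑ i ∈ s, p i)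
    (hq : ∀ i ∈ s, q i ∈ Set.Icc a b) :
    (∑ i ∈ s, p i * q i) / ∑ i ∈ s, p i ∈ Set.Icc a b := by
  have h := (convex_Icc a b).centerMass_mem hp hpos hq
  rwa [Finset.centerMass, smul_eq_mul, inv_mul_eq_div] at h

lemma sum_mul_G_div_sum_le {a b δ η : ℝ} (hp : ∀ i ∈ s, 0 ≤ p i) (hpos : 0 < ∑ i ∈ s, p i)
    (hq : ∀ i ∈ s, q i ∈ Set.Icc a b) (hδ : 0 ≤ δ) (hη : 0 ≤ η)
    (hnet : ∀ x ∈ Set.Icc a b, ∀ y ∈ Set.Icc a b, G y ≤ max δ ((1 + η) * G x)) :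
    (∑ i ∈ s, p i) * G ((∑ i ∈ s, p i * q i) / ∑ i ∈ s, p i) ≤
      ∑ i ∈ s, p i * (δ + (1 + η) * G (q i)) := by
  rw [Finset.sum_mul]
  refine Finset.sum_le_sum fun i hi => mul_le_mul_of_nonneg_left ?_ (hp i hi)
  calc G ((∑ i ∈ s, p i * q i) / ∑ i ∈ s, p i)
      ≤ max δ ((1 + η) * G (q i)) := hnet _ (hq i hi) _ (div_sum_mem_Icc hp hpos hq)
    _ ≤ δ + (1 + η) * G (q i) := max_le_add_of_nonneg hδ (by have := G_nonneg (q i); positivity)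

end WeightedAverage

theorem stmt10_general {N : Type*} [Fintype N]
    (p : N → ℝ) (hp : ∀ u, 0 ≤ p u) (hpsum : ∑ u, p u ≤ 1)
    (q : N → ℝ)
    (H lam : ℝ) (hH : 0 < H) (hlam : lam ∈ Set.Ioo (0 : ℝ) 1)
    (hent : ∑ u, p u * G (q u) ≤ (1 - lam) * H)
    (δ η : ℝ) (hδ : δ = lam * H / 6) (hη : η = lam / 3)
    (w : ℕ) (v : ℕ → ℝ)
    (hnet : ∀ k < w, ∀ x ∈ Set.Icc (v k) (v (k + 1)), ∀ y ∈ Set.Icc (v k) (v (k + 1)),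
      G y ≤ max δ ((1 + η) * G x))
    (κ : N → ℕ) (hκ : ∀ u, κ u < w ∧ q u ∈ Set.Icc (v (κ u)) (v (κ u + 1)))
    (pJ qJ : ℕ → ℝ)
    (hpJ : ∀ k, pJ k = ∑ u ∈ Finset.univ.filter (fun u => κ u = k), p u)
    (hqJ : ∀ k, qJ k = (∑ u ∈ Finset.univ.filter (fun u => κ u = k), p u * q u) / pJ k) :
    ∑ k ∈ (Finset.range w).filter (fun k => 0 < pJ k), pJ k * G (qJ k) ≤
      (1 - lam / 2) * H := by
  obtain ⟨hlam0, -⟩ := hlam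
  have hδ0 : 0 ≤ δ := by rw [hδ]; positivity
  have hη0 : 0 ≤ η := by rw [hη]; positivity
  set cost : N → ℝ := fun u => p u * (δ + (1 + η) * G (q u))
  have hcost : ∀ u, 0 ≤ cost u := fun u => by have := G_nonneg (q u); have := hp u; positivity
  have hgroup : ∀ k ∈ (Finset.range w).filter (fun k => 0 < pJ k),
      pJ k * G (qJ k) ≤ ∑ u ∈ Finset.univ.filter (fun u => κ u = k), cost u := by
    intro k hk
    obtain ⟨hkw, hpos⟩ := Finset.mem_filter.mp hk
    rw [hqJ, hpJ] at *
    refine sum_mul_G_div_sum_le (fun u _ => hp u) hpos (fun u hu => ?_) hδ0 hη0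
      (hnet k (Finset.mem_range.mp hkw))
    obtain rfl := (Finset.mem_filter.mp hu).2
    exact (hκ u).2
  calc ∑ k ∈ (Finset.range w).filter (fun k => 0 < pJ k), pJ k * G (qJ k)
      ≤ ∑ k ∈ (Finset.range w).filter (fun k => 0 < pJ k),
          ∑ u ∈ Finset.univ.filter (fun u => κ u = k), cost u := Finset.sum_le_sum hgroup
    _ ≤ ∑ k ∈ Finset.range w, ∑ u ∈ Finset.univ.filter (fun u => κ u = k), cost u :=
        Finset.sum_le_sum_of_subset_of_nonneg (Finset.filter_subset _ _)
          fun k _ _ => Finset.sum_nonneg fun u _ => hcost u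
    _ = (∑ u, p u) * δ + (1 + η) * ∑ u, p u * G (q u) := by
        rw [Finset.sum_fiberwise_of_maps_to fun u _ => Finset.mem_range.mpr (hκ u).1,
          Finset.sum_mul, Finset.mul_sum, ← Finset.sum_add_distrib]
        exact Finset.sum_congr rfl fun u _ => by ring
    _ ≤ 1 * δ + (1 + η) * ((1 - lam) * H) := by gcongr
    _ ≤ (1 - lam / 2) * H := by rw [hδ, hη]; nlinarith

/-- merge lemma: let `p : N → ℝ` be nonnegative weights with total mass `≤ 1`,
`q : N → [0,1]`, and suppose `Σ_u p_u G(q_u) ≤ (1-λ)·H` for some `H > 0`, `λ ∈ (0,1)`.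
Given a `(δ,η)`-net `0 = v_0 ≤ … ≤ v_w = 1` with `δ = λH/6` and `η = λ/3`, and an assignment
`κ` of each `u ∈ N` to an interval `[v_{κ u}, v_{κ u + 1}]` containing `q_u`, the merged
groups `J_k = κ⁻¹(k)` with masses `pJ_k` and averages `qJ_k` satisfy
`Σ_{k : pJ_k > 0} pJ_k · G(qJ_k) ≤ (1 - λ/2)·H`. -/
theorem stmt10 {N : Type*} [Fintype N]
    (p : N → ℝ) (hp : ∀ u, 0 ≤ p u) (hpsum : ∑ u, p u ≤ 1)
    (q : N → ℝ) (hq : ∀ u, q u ∈ Set.Icc (0 : ℝ) 1)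
    (H lam : ℝ) (hH : 0 < H) (hlam : lam ∈ Set.Ioo (0 : ℝ) 1)
    (hent : ∑ u, p u * G (q u) ≤ (1 - lam) * H)
    (δ η : ℝ) (hδ : δ = lam * H / 6) (hη : η = lam / 3)
    (w : ℕ) (v : ℕ → ℝ) (hv0 : v 0 = 0) (hvw : v w = 1)
    (hmono : ∀ k < w, v k ≤ v (k + 1))
    (hnet : ∀ k < w, ∀ x ∈ Set.Icc (v k) (v (k + 1)), ∀ y ∈ Set.Icc (v k) (v (k + 1)),
      G y ≤ max δ ((1 + η) * G x))
    (κ : N → ℕ) (hκ : ∀ u, κ u < w ∧ q u ∈ Set.Icc (v (κ u)) (v (κ u + 1)))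
    (pJ qJ : ℕ → ℝ)
    (hpJ : ∀ k, pJ k = ∑ u ∈ Finset.univ.filter (fun u => κ u = k), p u)
    (hqJ : ∀ k, qJ k = (∑ u ∈ Finset.univ.filter (fun u => κ u = k), p u * q u) / pJ k) :
    ∑ k ∈ (Finset.range w).filter (fun k => 0 < pJ k), pJ k * G (qJ k) ≤
      (1 - lam / 2) * H :=
  stmt10_general p hp hpsum q H lam hH hlam hent δ η hδ hη w v hnet κ hκ pJ qJ hpJ hqJ
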